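/- Let α, β, γ : [0,T] → ℝ with α(s) = β(s) + γ(s) for all s, where γ is non-negative and non-decreasing. Define the one-sided reflection map R(ξ)(t) = ξ(t) - min(0, inf_{s ∈ [0,t]} ξ(s)). Then R(α)(t) ≥ R(β)(t) for all t ∈ [0,T]. -/

import Mathlib

/-
Since `γ` is non-decreasing, `α(s) ≤ β(s) + γ(t)` for `s ≤ t`, so the running infimum of `α`
exceeds that of `β` by at most `γ(t) ≥ 0`; the same holds after taking `min 0`, while
`α(t) = β(t) + γ(t)` exactly, hence `R(β)(t) ≤ R(α)(t)`.
-/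

open Set

/-- The one-sided reflection map `R(ξ)(t) = ξ(t) - min(0, inf_{s ∈ [0,t]} ξ(s))`. -/
noncomputable def reflect (ξ : ℝ → ℝ) (t : ℝ) : ℝ :=
  ξ t - min 0 (sInf (ξ '' Set.Icc 0 t))

theorem csInf_image_le_csInf_image_add {ι : Type*} {S : Set ι} {a b : ι → ℝ} {c : ℝ}
    (hS : S.Nonempty) (ha : BddBelow (a '' S)) (hle : ∀ s ∈ S, a s ≤ b s + c) :
    sInf (a '' S) ≤ sInf (b '' S) + c := by
  rw [← sub_le_iff_le_add]
  refine le_csInf (hS.image b) ?_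
  rintro _ ⟨s, hs, rfl⟩
  have := csInf_le ha (mem_image_of_mem a hs)
  linarith [hle s hs]

theorem reflect_le_reflect_of_le_add {a b : ℝ → ℝ} {t c : ℝ} (ht : 0 ≤ t)
    (ha : BddBelow (a '' Icc 0 t)) (hc : 0 ≤ c) (hle : ∀ s ∈ Icc 0 t, a s ≤ b s + c)
    (heq : a t = b t + c) :
    reflect b t ≤ reflect a t := by
  have hinf := csInf_image_le_csInf_image_add (nonempty_Icc.2 ht) ha hle
  have hmin : min 0 (sInf (a '' Icc 0 t)) ≤ min 0 (sInf (b '' Icc 0 t)) + c := by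
    rw [← min_add_add_right, zero_add]
    exact min_le_min hc hinf
  unfold reflect
  linarith

theorem reflect_monotone_in_nondecreasing_part_general (T : ℝ)
    (a b g : ℝ → ℝ)
    (hBa : BddBelow (a '' Set.Icc 0 T))
    (hsum : ∀ s ∈ Set.Icc 0 T, a s = b s + g s)
    (hg_nonneg : ∀ s ∈ Set.Icc 0 T, 0 ≤ g s)
    (hg_mono : ∀ s ∈ Set.Icc 0 T, ∀ t ∈ Set.Icc 0 T, s ≤ t → g s ≤ g t) :
    ∀ t ∈ Set.Icc 0 T, reflect b t ≤ reflect a t := by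
  intro t ht
  have hsub : Icc 0 t ⊆ Icc 0 T := Icc_subset_Icc_right ht.2
  refine reflect_le_reflect_of_le_add ht.1 (hBa.mono (image_mono hsub)) (hg_nonneg t ht)
    (fun s hs => ?_) (hsum t ht)
  rw [hsum s (hsub hs)]
  exact add_le_add_right (hg_mono s (hsub hs) t ht hs.2) (b s)

theorem reflect_monotone_in_nondecreasing_part (T : ℝ) (hT : 0 < T)
    (a b g : ℝ → ℝ)
    (hBa : BddBelow (a '' Set.Icc 0 T)) (hBb : BddBelow (b '' Set.Icc 0 T))
    (hsum : ∀ s ∈ Set.Icc 0 T, a s = b s + g s)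
    (hg_nonneg : ∀ s ∈ Set.Icc 0 T, 0 ≤ g s)
    (hg_mono : ∀ s ∈ Set.Icc 0 T, ∀ t ∈ Set.Icc 0 T, s ≤ t → g s ≤ g t) :
    ∀ t ∈ Set.Icc 0 T, reflect b t ≤ reflect a t :=
  reflect_monotone_in_nondecreasing_part_general T a b g hBa hsum hg_nonneg hg_mono
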